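/- Fix k ≥ 1. The set of positive integers n such that F_{2k} appears in both the Zeckendorf decomposition and the Chung-Graham decomposition of n equals { mF_{2k} + ⌊(m−1)φ⌋ F_{2k+1} + j : m ∈ ℕ, m ≥ 1, 0 ≤ j ≤ F_{2k−1} − 1 }, where φ = (1+√5)/2. -/

import Mathlib

/-- The finite golden strings: `gs 1 = [B]`, `gs 2 = [B, A]`, `gs n = gs (n-1) ++ gs (n-2)`.
Here `true` denotes the letter B and `false` denotes the letter A. -/
def gs : ℕ → List Bool
  | 0 => []
  | 1 => [true]
  | 2 => [true, false]
  | (n+3) => gs (n+2) ++ gs (n+1)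

/-- The `i`-th letter (1-indexed) of the infinite golden string `S`;
`true` = B, `false` = A.  Since `gs n` is a prefix of `gs (n+1)` and
`(gs (i+1)).length = F (i+2) ≥ i`, this is well-defined. -/
def goldenLetter (i : ℕ) : Bool := (gs (i+1)).getD (i-1) true

/-- `s` is the (index set of the) Zeckendorf decomposition of `n`:
a set of indices `≥ 2`, no two adjacent, with `n = ∑_{i ∈ s} F i`. -/
def IsZeck (n : ℕ) (s : Finset ℕ) : Prop :=
  (∀ i ∈ s, 2 ≤ i) ∧ (∀ i ∈ s, i + 1 ∉ s) ∧ n = ∑ i ∈ s, Nat.fib i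

/-- `c` is the coefficient function of the Chung–Graham decomposition of `n`:
`n = ∑_{i ≥ 1} c i * F (2i)` with `c i ∈ {0,1,2}` and a coefficient `0`
strictly between any two coefficients equal to `2`. -/
def IsCG (n : ℕ) (c : ℕ →₀ ℕ) : Prop :=
  (∀ i, c i ≤ 2) ∧ c 0 = 0 ∧
  (∀ i₁ i₂, i₁ < i₂ → c i₁ = 2 → c i₂ = 2 → ∃ j, i₁ < j ∧ j < i₂ ∧ c j = 0) ∧
  n = c.sum (fun i a => a * Nat.fib (2 * i))

/-- `n` has `F (2k)` as the smallest summand of its Zeckendorf decomposition. -/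
def ZeckMin (k n : ℕ) : Prop :=
  ∃ s : Finset ℕ, IsZeck n s ∧ 2 * k ∈ s ∧ ∀ i ∈ s, 2 * k ≤ i

/-- `n` has `F (2k)` or `2 F (2k)` as the smallest summand of its
Chung–Graham decomposition. -/
def CGMin (k n : ℕ) : Prop :=
  ∃ c : ℕ →₀ ℕ, IsCG n c ∧ 1 ≤ c k ∧ ∀ i < k, c i = 0

/-!
Split the Zeckendorf decomposition of `n` at `2k`: `n = ∑_{i ∈ B} F_i + F_{2k} + j` with
`B ⊆ [2k+2, ∞)` and `j < F_{2k-1}`. Working down from the largest index of `B`, and rewriting an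
odd top term `F_{2t+1}` as `F_{2t} + F_{2t-1}` or as `2 F_{2t}` plus a smaller term, builds the
Chung–Graham decomposition explicitly: its digit at `k` is `1` when the least index of `B` is even
and `0` when it is odd, and by uniqueness this is the digit of `n`.

With `B = A + (2k+1)` and `F_{i+2k+1} = F_i F_{2k} + F_{i+1} F_{2k+1}` one gets
`n = (T+1) F_{2k} + X F_{2k+1} + j`, where `T = ∑_A F_i` and `X = ∑_A F_{i+1}`. Now
`X - φ T = ∑_A ψ^i`, which lies in `(-1, 0)` when the least index of `A` is odd, so `X = ⌊T φ⌋`.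
Conversely every `T` is such a sum: replace an even least index `2u` of its Zeckendorf
decomposition by `1, 3, …, 2u-1`.
-/

open Finset Nat

def Sparse (s : Finset ℕ) : Prop := ∀ i ∈ s, i + 1 ∉ s

theorem Sparse.subset {s t : Finset ℕ} (hs : Sparse s) (h : t ⊆ s) : Sparse t :=
  fun i hi hi1 => hs i (h hi) (h hi1)

theorem Sparse.union {s t : Finset ℕ} (hs : Sparse s) (ht : Sparse t)
    (hst : ∀ i ∈ s, ∀ j ∈ t, i + 2 ≤ j) : Sparse (s ∪ t) := by
  intro i hi hi1
  rcases mem_union.1 hi with hi | hi <;> rcases mem_union.1 hi1 with hi1 | hi1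
  · exact hs i hi hi1
  · have := hst i hi _ hi1; omega
  · have := hst _ hi1 i hi; omega
  · exact ht i hi hi1

theorem Sparse.of_insert {s : Finset ℕ} {a : ℕ} (hs : Sparse (insert a s))
    (ha : ∀ x ∈ s, x < a) : Sparse s ∧ ∀ x ∈ s, x + 2 ≤ a := by
  refine ⟨hs.subset (subset_insert a s), fun x hx => ?_⟩
  have := ha x hx
  have : x + 1 ≠ a := fun h => hs x (mem_insert_of_mem hx) (h ▸ mem_insert_self a s)
  omega

theorem Sparse.map_add {A : Finset ℕ} (hA : Sparse A) (n : ℕ) :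
    Sparse (A.map (addRightEmbedding n)) := fun i hi hi1 => by
  obtain ⟨x, hx, rfl⟩ := mem_map.1 hi
  obtain ⟨y, hy, hxy⟩ := mem_map.1 hi1
  simp only [addRightEmbedding_apply] at hxy
  exact hA x hx (by rwa [show x + 1 = y by omega])

theorem le_of_mem_map_add {A : Finset ℕ} {m : ℕ} (h : ∀ i ∈ A, m ≤ i) (n : ℕ) :
    ∀ i ∈ A.map (addRightEmbedding n), m + n ≤ i := fun i hi => by
  obtain ⟨x, hx, rfl⟩ := mem_map.1 hi
  simpa using h x hx

theorem sum_fib_add_fib_le {s : Finset ℕ} (hs : Sparse s) {b M : ℕ} (hb : 1 ≤ b)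
    (hbM : b ≤ M + 1) (hmem : ∀ i ∈ s, b < i ∧ i ≤ M) :
    ∑ i ∈ s, fib i + fib b ≤ fib (M + 1) := by
  induction s using Finset.induction_on_max generalizing M with
  | empty => simpa using fib_mono hbM
  | insert a s ha ih =>
    obtain ⟨hs', hgap⟩ := hs.of_insert ha
    have ⟨hba, haM⟩ := hmem a (mem_insert_self a s)
    have := ih hs' (M := a - 2) (by omega) fun i hi => ⟨(hmem i (mem_insert_of_mem hi)).1,
      by have := hgap i hi; omega⟩
    have hfa : fib (a + 1) = fib (a - 1) + fib a := by
      rw [fib_add_one (by omega)]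
    rw [sum_insert fun h => (ha a h).false, show a - 2 + 1 = a - 1 by omega] at *
    have := fib_mono (show a + 1 ≤ M + 1 by omega)
    omega

theorem exists_sparse_sum_fib (n M : ℕ) (h : n < fib (M + 1)) :
    ∃ s : Finset ℕ, Sparse s ∧ (∀ i ∈ s, 2 ≤ i ∧ i ≤ M) ∧ ∑ i ∈ s, fib i = n := by
  induction n using Nat.strong_induction_on generalizing M with
  | _ n ih =>
    rcases Nat.eq_zero_or_pos n with rfl | hn
    · exact ⟨∅, by simp [Sparse], by simp, by simp⟩
    set q := greatestFib n
    have hq : fib q ≤ n := fib_greatestFib_le n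
    have hnq : n < fib (q + 1) := lt_fib_greatestFib_add_one n
    have hq2 : 2 ≤ q := le_greatestFib.2 (by simpa using Nat.one_le_iff_ne_zero.2 hn.ne')
    have hqM : q ≤ M := by
      by_contra hqM
      have := fib_mono (show M + 1 ≤ q by omega)
      omega
    have hfq : fib (q + 1) = fib (q - 1) + fib q := fib_add_one (by omega)
    have hq0 := fib_pos.2 (show 0 < q by omega)
    obtain ⟨s, hs, hsmem, hsum⟩ := ih (n - fib q) (by omega) (q - 2) (by rw [show q - 2 + 1 = q - 1 by omega]; omega)
    refine ⟨insert q s, ?_, ?_, ?_⟩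
    · rw [insert_eq, union_comm]
      refine hs.union (by simp [Sparse]) fun i hi j hj => ?_
      rw [mem_singleton.1 hj]; have := hsmem i hi; omega
    · intro i hi
      rcases mem_insert.1 hi with rfl | hi
      · exact ⟨hq2, hqM⟩
      · have := hsmem i hi; omega
    · rw [sum_insert fun h => by have := hsmem q h; omega, hsum]
      omega

theorem fib_add_sum_fib_two_mul {i q : ℕ} (h : i < q) :
    fib (2 * i + 1) + ∑ s ∈ Ico (i + 1) q, fib (2 * s) = fib (2 * q - 1) := by
  induction q, h using Nat.le_induction with
  | base => simp [show 2 * (i + 1) - 1 = 2 * i + 1 by omega]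
  | succ q hq ih =>
    rw [sum_Ico_succ_top hq, ← add_assoc, ih, show 2 * (q + 1) - 1 = 2 * q - 1 + 2 by omega,
      fib_add_two, show 2 * q - 1 + 1 = 2 * q by omega]

theorem sum_range_fib_two_mul_add_one (u : ℕ) : ∑ s ∈ range u, fib (2 * s + 1) = fib (2 * u) := by
  induction u with
  | zero => simp
  | succ u ih => rw [sum_range_succ, ih, show 2 * (u + 1) = 2 * u + 2 by ring, fib_add_two]

theorem sum_fib_add_succ (A : Finset ℕ) (n : ℕ) :
    ∑ i ∈ A, fib (i + (n + 1)) =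
      (∑ i ∈ A, fib i) * fib n + (∑ i ∈ A, fib (i + 1)) * fib (n + 1) := by
  simp_rw [← add_assoc, fib_add, sum_add_distrib, sum_mul]

theorem sum_eq_sum_filter_lt_add {α M : Type*} [LinearOrder α] [AddCommMonoid M]
    (s : Finset α) (f : α → M) {x : α} (hx : x ∈ s) :
    ∑ i ∈ s, f i = ∑ i ∈ s.filter (x < ·), f i + f x + ∑ i ∈ s.filter (· < x), f i := by
  have hL : (s.filter (fun i => ¬ x < i)).erase x = s.filter (· < x) := by
    ext i
    simp only [mem_erase, mem_filter, not_lt]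
    constructor
    · rintro ⟨hix, his, hxi⟩
      exact ⟨his, lt_of_le_of_ne hxi hix⟩
    · rintro ⟨his, hix⟩
      exact ⟨hix.ne, his, hix.le⟩
  rw [← sum_filter_add_sum_filter_not s (x < ·), add_assoc, ← hL,
    add_sum_erase _ f (mem_filter.2 ⟨hx, lt_irrefl x⟩)]

theorem sum_range_mul_fib_lt {c : ℕ → ℕ} (hle : ∀ i, c i ≤ 2) (h0 : c 0 = 0)
    (hsep : ∀ i₁ i₂, i₁ < i₂ → c i₁ = 2 → c i₂ = 2 → ∃ j, i₁ < j ∧ j < i₂ ∧ c j = 0) (m : ℕ) :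
    ∑ i ∈ range (m + 1), c i * fib (2 * i) < fib (2 * m + 2) ∧
      ((∀ i ≤ m, c i = 2 → ∃ j, i < j ∧ j ≤ m ∧ c j = 0) →
        ∑ i ∈ range (m + 1), c i * fib (2 * i) < fib (2 * m + 1)) := by
  induction m with
  | zero => simp [h0]
  | succ m ih =>
    obtain ⟨ih, ihc⟩ := ih
    rw [sum_range_succ]
    have h3 : fib (2 * m + 3) = fib (2 * m + 1) + fib (2 * m + 2) := fib_add_two
    have h4 : fib (2 * m + 4) = fib (2 * m + 2) + fib (2 * m + 3) := fib_add_two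
    rw [show 2 * (m + 1) + 2 = 2 * m + 4 by ring, show 2 * (m + 1) + 1 = 2 * m + 3 by ring,
      show 2 * (m + 1) = 2 * m + 2 by ring]
    have := hle (m + 1)
    interval_cases hc : c (m + 1)
    · exact ⟨by omega, fun _ => by omega⟩
    · refine ⟨by omega, fun hcl => ?_⟩
      have := ihc fun i hi h2 => by
        obtain ⟨j, hij, hjm, hj⟩ := hcl i (by omega) h2
        have : j ≠ m + 1 := fun h => by rw [h, hc] at hj; exact one_ne_zero hj
        exact ⟨j, hij, by omega, hj⟩
      omega
    · have := ihc fun i hi h2 => by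
        obtain ⟨j, hij, hjm, hj⟩ := hsep i (m + 1) (by omega) h2 hc
        exact ⟨j, hij, by omega, hj⟩
      refine ⟨by omega, fun hcl => ?_⟩
      obtain ⟨j, hj, hj', -⟩ := hcl (m + 1) le_rfl hc
      omega

namespace IsCG

variable {n : ℕ} {c : ℕ →₀ ℕ}

theorem digit_mul_fib_le (h : IsCG n c) (i : ℕ) : c i * fib (2 * i) ≤ n := by
  rw [h.2.2.2]
  by_cases hi : c i = 0
  · simp [hi]
  · exact single_le_sum (f := fun i => c i * fib (2 * i)) (fun _ _ => Nat.zero_le _)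
      (Finsupp.mem_support_iff.2 hi)

theorem eq_zero_of_lt_fib (h : IsCG n c) {q i : ℕ} (hn : n < fib (2 * q)) (hi : q ≤ i) :
    c i = 0 := by
  by_contra hc
  have := h.digit_mul_fib_le i
  have := fib_mono (show 2 * q ≤ 2 * i by omega)
  have := Nat.le_mul_of_pos_left (fib (2 * i)) (Nat.pos_of_ne_zero hc)
  omega

theorem lt_fib (h : IsCG n c) {m : ℕ} (hm : ∀ i, m < i → c i = 0) : n < fib (2 * m + 2) := by
  have hsum : n = ∑ i ∈ range (m + 1), c i * fib (2 * i) := by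
    rw [h.2.2.2]
    refine sum_subset (fun i hi => mem_range.2 ?_) fun i _ hi => by
      simp [Finsupp.notMem_support_iff.1 hi]
    by_contra hmi
    exact Finsupp.mem_support_iff.1 hi (hm i (by omega))
  exact hsum ▸ (sum_range_mul_fib_lt h.1 h.2.1 h.2.2.1 m).1

theorem fib_le_of_eq_two (h : IsCG n c) {i q : ℕ} (hi : c i = 2) (hiq : i < q)
    (hpos : ∀ s, i < s → s < q → c s ≠ 0) : fib (2 * q - 1) ≤ n := by
  have hi1 : i ≠ 0 := by rintro rfl; simp [h.2.1] at hi
  have h2 : fib (2 * i + 1) ≤ 2 * fib (2 * i) := by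
    rw [fib_add_one (by omega)]
    have := fib_mono (show 2 * i - 1 ≤ 2 * i by omega)
    omega
  have hmid : ∑ s ∈ Ico (i + 1) q, fib (2 * s) ≤ ∑ s ∈ Ico (i + 1) q, c s * fib (2 * s) :=
    sum_le_sum fun s hs => by
      rw [mem_Ico] at hs
      exact Nat.le_mul_of_pos_left _ (Nat.pos_of_ne_zero (hpos s (by omega) hs.2))
  have hsub : ∑ s ∈ Ico i q, c s * fib (2 * s) ≤ n := by
    rw [h.2.2.2]
    exact sum_le_sum_of_ne_zero fun s _ hs =>
      Finsupp.mem_support_iff.2 fun h0 => hs (by simp [h0])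
  rw [sum_eq_sum_Ico_succ_bot hiq, hi] at hsub
  have := fib_add_sum_fib_two_mul hiq
  omega

theorem add_single (h : IsCG n c) {q d : ℕ} (hq : 1 ≤ q)
    (hd : d = 1 ∧ n < fib (2 * q) ∨ d = 2 ∧ n < fib (2 * q - 1)) :
    IsCG (n + d * fib (2 * q)) (c + Finsupp.single q d) := by
  have hnq : n < fib (2 * q) := by
    rcases hd with ⟨-, h'⟩ | ⟨-, h'⟩
    · exact h'
    · exact h'.trans_le (fib_mono (by omega))
  have hlow : ∀ i, c i ≠ 0 → i < q := fun i hi => by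
    by_contra hle
    exact hi (h.eq_zero_of_lt_fib hnq (not_lt.1 hle))
  have hcq : c q = 0 := h.eq_zero_of_lt_fib hnq le_rfl
  have happ : ∀ i, (c + Finsupp.single q d) i = c i + if i = q then d else 0 := fun i => by
    simp [Finsupp.single_apply, eq_comm]
  refine ⟨fun i => ?_, ?_, fun i₁ i₂ hlt h₁ h₂ => ?_, ?_⟩
  · rw [happ]
    have := h.1 i
    split_ifs with hi
    · have := hlow i; omega
    · omega
  · rw [happ, if_neg (by omega), h.2.1]
  · rw [happ] at h₁ h₂
    by_cases hi₂ : i₂ = q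
    · subst hi₂
      rw [if_neg (by omega)] at h₁
      simp only [add_zero, if_true] at h₁ h₂
      by_contra hne
      push Not at hne
      have := h.fib_le_of_eq_two h₁ hlt fun s hs hsq h0 => by
        have := hne s hs hsq; rw [happ, if_neg (by omega)] at this; omega
      rcases hd with ⟨rfl, -⟩ | ⟨-, hn⟩ <;> omega
    · rw [if_neg hi₂, add_zero] at h₂
      have hi₂q := hlow i₂ (by omega)
      rw [if_neg (by omega), add_zero] at h₁
      obtain ⟨j, hj₁, hj₂, hj⟩ := h.2.2.1 i₁ i₂ hlt h₁ h₂
      exact ⟨j, hj₁, hj₂, by rw [happ, if_neg (by omega), hj]⟩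
  · rw [Finsupp.sum_add_index' (fun _ => by simp) (fun _ _ _ => by ring),
      Finsupp.sum_single_index (by simp), ← h.2.2.2]

theorem erase (h : IsCG n c) (m : ℕ) : IsCG (n - c m * fib (2 * m)) (c.erase m) := by
  have happ : ∀ i, c.erase m i = if i = m then 0 else c i := fun i => by
    split_ifs with hi
    · simp [hi]
    · exact Finsupp.erase_ne hi
  refine ⟨fun i => ?_, ?_, fun i₁ i₂ hlt h₁ h₂ => ?_, ?_⟩
  · rw [happ]; split_ifs <;> simp [h.1 i]
  · rw [happ]; split_ifs <;> simp [h.2.1]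
  · rw [happ] at h₁ h₂
    split_ifs at h₁ h₂
    obtain ⟨j, hj₁, hj₂, hj⟩ := h.2.2.1 i₁ i₂ hlt h₁ h₂
    exact ⟨j, hj₁, hj₂, by rw [happ]; split_ifs <;> simp [hj]⟩
  · have := Finsupp.add_sum_erase' c m (fun i a => a * fib (2 * i)) (fun _ => by simp)
    have := h.digit_mul_fib_le m
    rw [← h.2.2.2] at *
    omega

end IsCG

theorem exists_isCG (n : ℕ) : ∃ c, IsCG n c := by
  induction n using Nat.strong_induction_on with
  | _ n ih =>
    rcases Nat.eq_zero_or_pos n with rfl | hn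
    · exact ⟨0, by simp [IsCG]⟩
    have hex : ∃ q, n < fib (2 * q + 2) := ⟨n, by have := le_fib_add_one (2 * n + 2); omega⟩
    obtain ⟨q, hnq, hmin⟩ : ∃ q, n < fib (2 * q + 2) ∧ ∀ q' < q, ¬ n < fib (2 * q' + 2) :=
      ⟨Nat.find hex, Nat.find_spec hex, fun _ => Nat.find_min hex⟩
    have hq : q ≠ 0 := fun h0 => by
      rw [h0, mul_zero, zero_add, fib_two] at hnq
      omega
    have hqn : fib (2 * q) ≤ n := by
      have := hmin (q - 1) (by omega)
      rw [show 2 * (q - 1) + 2 = 2 * q by omega] at this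
      omega
    have h2 : fib (2 * q + 2) = fib (2 * q) + fib (2 * q + 1) := fib_add_two
    have h1 : fib (2 * q + 1) = fib (2 * q - 1) + fib (2 * q) := fib_add_one (by omega)
    have hF := fib_pos.2 (show 0 < 2 * q by omega)
    by_cases hsmall : n < 2 * fib (2 * q)
    · obtain ⟨c, hc⟩ := ih (n - fib (2 * q)) (by omega)
      have := hc.add_single (q := q) (d := 1) (by omega) (Or.inl ⟨rfl, by omega⟩)
      exact ⟨_, by rwa [one_mul, Nat.sub_add_cancel hqn] at this⟩
    · obtain ⟨c, hc⟩ := ih (n - 2 * fib (2 * q)) (by omega)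
      have := hc.add_single (q := q) (d := 2) (by omega) (Or.inr ⟨rfl, by omega⟩)
      exact ⟨_, by rwa [Nat.sub_add_cancel (by omega)] at this⟩

theorem erase_apply_eq_zero {c : ℕ →₀ ℕ} {m : ℕ} (hc : ∀ i, m + 1 < i → c i = 0) {i : ℕ}
    (hi : m < i) : c.erase (m + 1) i = 0 := by
  rcases eq_or_ne i (m + 1) with rfl | hne
  · simp
  · rw [Finsupp.erase_ne hne]; exact hc i (by omega)

theorem IsCG.digit_eq_div {n m : ℕ} {c : ℕ →₀ ℕ} (h : IsCG n c)
    (hc : ∀ i, m + 1 < i → c i = 0) : c (m + 1) = n / fib (2 * (m + 1)) := by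
  have hr := (h.erase (m + 1)).lt_fib fun i => erase_apply_eq_zero hc
  have := h.digit_mul_fib_le (m + 1)
  rw [show 2 * m + 2 = 2 * (m + 1) by ring] at hr
  symm
  apply Nat.div_eq_of_lt_le this
  rw [add_mul, one_mul]
  omega

theorem IsCG.eq_of_forall_lt (m : ℕ) {n : ℕ} {c c' : ℕ →₀ ℕ} (h : IsCG n c) (h' : IsCG n c')
    (hc : ∀ i, m < i → c i = 0) (hc' : ∀ i, m < i → c' i = 0) : c = c' := by
  induction m generalizing n c c' with
  | zero =>
    ext i
    rcases Nat.eq_zero_or_pos i with rfl | hi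
    · rw [h.2.1, h'.2.1]
    · rw [hc i hi, hc' i hi]
  | succ m ih =>
    have htop : c (m + 1) = c' (m + 1) := (h.digit_eq_div hc).trans (h'.digit_eq_div hc').symm
    have h'e := h'.erase (m + 1)
    rw [← htop] at h'e
    have hrest := ih (h.erase (m + 1)) h'e (fun i => erase_apply_eq_zero hc)
      (fun i => erase_apply_eq_zero hc')
    ext i
    rcases eq_or_ne i (m + 1) with rfl | hne
    · exact htop
    · simpa [Finsupp.erase_ne hne] using DFunLike.congr_fun hrest i

theorem IsCG.unique {n : ℕ} {c c' : ℕ →₀ ℕ} (h : IsCG n c) (h' : IsCG n c') : c = c' := by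
  have hvan : ∀ d : ℕ →₀ ℕ, IsCG n d → ∀ i, n < i → d i = 0 := fun d hd i hi =>
    hd.eq_zero_of_lt_fib (q := i) (by have := le_fib_add_one (2 * i); omega) le_rfl
  exact IsCG.eq_of_forall_lt n h h' (hvan c h) (hvan c' h')

section Digit

variable {k j : ℕ}

def CGParity (k n b : ℕ) : Prop := ∃ c : ℕ →₀ ℕ, IsCG n c ∧ c k + b % 2 = 1

theorem CGParity.add_fib {R n b q : ℕ} (h : CGParity k R b) (hq : 1 ≤ q) (hqk : q ≠ k)
    (hR : R < fib (2 * q)) (hn : n = R + fib (2 * q)) : CGParity k n b := by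
  obtain ⟨c, hc, hck⟩ := h
  have := hc.add_single hq (Or.inl ⟨rfl, hR⟩)
  rw [one_mul, ← hn] at this
  refine ⟨_, this, ?_⟩
  rwa [Finsupp.add_apply, Finsupp.single_eq_of_ne hqk.symm, add_zero]

theorem CGParity.add_two_fib {R n b q : ℕ} (h : CGParity k R b) (hq : 1 ≤ q) (hqk : q ≠ k)
    (hR : R < fib (2 * q - 1)) (hn : n = R + 2 * fib (2 * q)) : CGParity k n b := by
  obtain ⟨c, hc, hck⟩ := h
  refine ⟨_, hn ▸ hc.add_single hq (Or.inr ⟨rfl, hR⟩), ?_⟩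
  rwa [Finsupp.add_apply, Finsupp.single_eq_of_ne hqk.symm, add_zero]

theorem cgParity_of_lt {R b : ℕ} (hR : R < fib (2 * k)) (hb : Odd b) : CGParity k R b := by
  obtain ⟨c, hc⟩ := exists_isCG R
  exact ⟨c, hc, by rw [hc.eq_zero_of_lt_fib hR le_rfl, Nat.odd_iff.1 hb]⟩

theorem cgParity_base (hk : 1 ≤ k) (hj : j < fib (2 * k - 1)) {b : ℕ} (hb : Even b) :
    CGParity k (fib (2 * k) + j) b := by
  obtain ⟨c, hc⟩ := exists_isCG j
  have hjk : j < fib (2 * k) := hj.trans_le (fib_mono (by omega))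
  have := hc.add_single hk (Or.inl ⟨rfl, hjk⟩)
  rw [one_mul, add_comm] at this
  refine ⟨_, this, ?_⟩
  rw [Finsupp.add_apply, hc.eq_zero_of_lt_fib hjk le_rfl, Finsupp.single_eq_same,
    Nat.even_iff.1 hb]

theorem sum_add_fib_add_lt (hk : 1 ≤ k) (hj : j < fib (2 * k - 1)) {C : Finset ℕ} {M : ℕ}
    (hC : Sparse C) (hmem : ∀ i ∈ C, 2 * k + 2 ≤ i ∧ i < M) (hM : 2 * k < M) :
    ∑ i ∈ C, fib i + fib (2 * k) + j < fib M := by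
  have := sum_fib_add_fib_le hC (b := 2 * k + 1) (M := M - 1) (by omega) (by omega) fun i hi =>
    ⟨by have := hmem i hi; omega, by have := hmem i hi; omega⟩
  rw [Nat.sub_add_cancel (by omega)] at this
  have : fib (2 * k + 1) = fib (2 * k - 1) + fib (2 * k) := fib_add_one (by omega)
  omega

theorem mem_erase_or_of_least {α : Type*} [LinearOrder α] {C : Finset α} {b x : α} (hb : b ∈ C)
    (hbC : ∀ i ∈ C, b ≤ i) (hx : ∀ i ∈ C, i ≤ x) : b ∈ C.erase x ∨ C.erase x = ∅ ∧ b = x := by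
  by_cases h : b = x
  · refine Or.inr ⟨eq_empty_of_forall_notMem fun i hi => ?_, h⟩
    have ⟨hix, hiC⟩ := mem_erase.1 hi
    exact hix (le_antisymm (hx i hiC) (h ▸ hbC i hiC))
  · exact Or.inl (mem_erase.2 ⟨h, hb⟩)

-- The value `F (2t+1) + ∑ C`, where `C` may contain `2t+1` or `2t`; `b` has the parity of the
-- least index.
structure OddConfig (k t : ℕ) (C : Finset ℕ) (b : ℕ) : Prop where
  le : k ≤ t
  sparse : Sparse C
  mem : ∀ i ∈ C, 2 * k + 2 ≤ i ∧ i ≤ 2 * t + 1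
  least : b ∈ C ∨ C = ∅ ∧ Odd b
  least_le : ∀ i ∈ C, b ≤ i

namespace OddConfig

variable {t : ℕ} {C : Finset ℕ} {b : ℕ}

theorem least_erase_of_mem (hc : OddConfig k t C b) {x : ℕ} (hx : x ∈ C)
    (htop : ∀ i ∈ C, i ≤ x) : b ∈ C.erase x ∨ C.erase x = ∅ ∧ b = x :=
  mem_erase_or_of_least (hc.least.resolve_right fun h => by simp [h.1] at hx) hc.least_le htop

theorem erase_top (hc : OddConfig k t C b) {s : ℕ} (hks : k ≤ s) (hx : 2 * s + 3 ∈ C)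
    (htop : ∀ i ∈ C, i ≤ 2 * s + 3) : OddConfig k s (C.erase (2 * s + 3)) b where
  le := hks
  sparse := hc.sparse.subset (erase_subset _ _)
  mem i hi := by
    have ⟨hi3, hiC⟩ := mem_erase.1 hi
    have := hc.mem i hiC
    have := htop i hiC
    have : i ≠ 2 * s + 2 := fun h => hc.sparse i hiC (h ▸ hx)
    omega
  least := (hc.least_erase_of_mem hx htop).imp_right
    fun h : _ ∧ b = 2 * s + 3 => ⟨h.1, h.2 ▸ ⟨s + 1, by ring⟩⟩
  least_le i hi := hc.least_le i (mem_of_mem_erase hi)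

theorem erase_even (hc : OddConfig k t C b) {s : ℕ} (hx : 2 * s + 2 ∈ C) (hx3 : 2 * s + 3 ∉ C)
    (htop : ∀ i ∈ C, i ≤ 2 * s + 3) :
    (∀ i ∈ C.erase (2 * s + 2), 2 * k + 2 ≤ i ∧ i < 2 * s + 1) ∧
      (b ∈ C.erase (2 * s + 2) ∨ C.erase (2 * s + 2) = ∅ ∧ Even b) := by
  refine ⟨fun i hi => ?_, (hc.least_erase_of_mem hx fun i hi => ?_).imp_right
    fun h : _ ∧ b = 2 * s + 2 => ⟨h.1, h.2 ▸ ⟨s + 1, by ring⟩⟩⟩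
  · have ⟨hi2, hiC⟩ := mem_erase.1 hi
    have := hc.mem i hiC
    have := htop i hiC
    have : i ≠ 2 * s + 3 := fun h => hx3 (h ▸ hiC)
    have : i ≠ 2 * s + 1 := fun h => hc.sparse i hiC (h ▸ hx)
    omega
  · have := htop i hi
    have : i ≠ 2 * s + 3 := fun h => hx3 (h ▸ hi)
    omega

theorem sum_lt (hc : OddConfig k t C b) (hk : 1 ≤ k) (hj : j < fib (2 * k - 1)) :
    ∑ i ∈ C, fib i + fib (2 * k) + j < fib (2 * t + 2) :=
  sum_add_fib_add_lt hk hj hc.sparse (fun i hi => ⟨(hc.mem i hi).1, by have := hc.mem i hi; omega⟩)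
    (by have := hc.le; omega)

end OddConfig

def CGParityBelow (k j V : ℕ) : Prop :=
  ∀ t C b, OddConfig k t C b → fib (2 * t + 1) + ∑ i ∈ C, fib i < V →
    CGParity k (fib (2 * t + 1) + ∑ i ∈ C, fib i + fib (2 * k) + j) b

theorem cgParity_sparse_of_below (hk : 1 ≤ k) (hj : j < fib (2 * k - 1)) {V : ℕ}
    (ih : CGParityBelow k j V) {S : Finset ℕ} (hS : Sparse S) (hmem : ∀ i ∈ S, 2 * k + 2 ≤ i)
    (hV : ∑ i ∈ S, fib i < V) {b : ℕ} (hb : b ∈ S ∨ S = ∅ ∧ Even b) (hbS : ∀ i ∈ S, b ≤ i) :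
    CGParity k (∑ i ∈ S, fib i + fib (2 * k) + j) b := by
  induction S using Finset.induction_on_max with
  | empty => simpa using cgParity_base hk hj (hb.resolve_left (notMem_empty b)).2
  | insert a S ha ihS =>
    obtain ⟨hS', hgap⟩ := hS.of_insert ha
    have ha2 := hmem a (mem_insert_self a S)
    have hb' : b ∈ S ∨ S = ∅ ∧ b = a := by
      rcases hb with hb | ⟨hb, -⟩
      · rw [← erase_insert fun h => (ha a h).false]
        exact mem_erase_or_of_least hb hbS fun i hi => by
          rcases mem_insert.1 hi with rfl | hi
          · rfl
          · exact (ha i hi).le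
      · exact absurd hb (insert_ne_empty a S)
    rw [sum_insert fun h => (ha a h).false] at hV ⊢
    rcases a.even_or_odd' with ⟨u, rfl | rfl⟩
    · refine (ihS hS' (fun i hi => hmem i (mem_insert_of_mem hi)) (by omega)
        (hb'.imp_right fun h : S = ∅ ∧ b = 2 * u => ⟨h.1, h.2 ▸ even_two_mul u⟩)
        fun i hi => hbS i (mem_insert_of_mem hi)).add_fib (q := u) (by omega) (by omega) ?_
        (by ring)
      have := sum_add_fib_add_lt hk hj (M := 2 * u - 1) hS'
        (fun i hi => ⟨hmem i (mem_insert_of_mem hi), by have := hgap i hi; omega⟩) (by omega)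
      have := fib_mono (show 2 * u - 1 ≤ 2 * u by omega)
      omega
    · exact ih u S b ⟨by omega, hS', fun i hi => ⟨hmem i (mem_insert_of_mem hi),
        (ha i hi).le⟩, hb'.imp_right fun h : S = ∅ ∧ b = 2 * u + 1 =>
          ⟨h.1, h.2 ▸ odd_two_mul_add_one u⟩,
        fun i hi => hbS i (mem_insert_of_mem hi)⟩ hV

theorem cgParity_of_empty (hk : 1 ≤ k) (hj : j < fib (2 * k - 1)) {t b : ℕ} (hb : Odd b)
    (hkt : k ≤ t) (ht : t ≤ k + 1) : CGParity k (fib (2 * t + 1) + fib (2 * k) + j) b := by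
  -- `F(2k+1) + F(2k) = F(2k+2)` and `F(2k+3) + F(2k) = 2 F(2k+2)`
  have hj' := cgParity_of_lt (k := k) (R := j) (hj.trans_le (fib_mono (by omega))) hb
  have h1 : fib (2 * k + 1) = fib (2 * k - 1) + fib (2 * k) := fib_add_one (by omega)
  have h2 : fib (2 * k + 2) = fib (2 * k) + fib (2 * k + 1) := fib_add_two
  have h3 : fib (2 * k + 3) = fib (2 * k + 1) + fib (2 * k + 2) := fib_add_two
  have e : 2 * (k + 1) = 2 * k + 2 := by ring
  obtain h | h : t = k ∨ t = k + 1 := by omega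
  · subst t
    exact hj'.add_fib (q := k + 1) (by omega) (by omega) (by rw [e]; omega) (by rw [e]; omega)
  · subst t
    exact hj'.add_two_fib (q := k + 1) (by omega) (by omega)
      (by rw [show 2 * (k + 1) - 1 = 2 * k + 1 by omega]; omega)
      (by rw [show 2 * (k + 1) + 1 = 2 * k + 3 by ring, e]; omega)

theorem cgParity_gap_zero (hk : 1 ≤ k) (hj : j < fib (2 * k - 1)) {s : ℕ} {C : Finset ℕ}
    {b : ℕ} (ih : CGParityBelow k j (fib (2 * s + 3) + ∑ i ∈ C, fib i))
    (hc : OddConfig k (s + 1) C b) (hx : 2 * s + 3 ∈ C) :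
    CGParity k (fib (2 * s + 3) + ∑ i ∈ C, fib i + fib (2 * k) + j) b := by
  -- `2 F(2s+3) = F(2s+1) + F(2s+4)`
  have h3 : fib (2 * s + 3) = fib (2 * s + 1) + fib (2 * s + 2) := fib_add_two
  have h4 : fib (2 * s + 4) = fib (2 * s + 2) + fib (2 * s + 3) := fib_add_two
  have e : 2 * (s + 2) = 2 * s + 4 := by ring
  have hc' := hc.erase_top (by have := hc.mem _ hx; omega) hx fun i hi => by
    have := hc.mem i hi; omega
  have hR := hc'.sum_lt hk hj
  rw [← add_sum_erase C fib hx] at ih ⊢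
  exact (ih s _ b hc' (by omega)).add_fib (q := s + 2) (by omega) (by have := hc'.le; omega)
    (by rw [e]; omega) (by rw [e]; omega)

theorem cgParity_gap_one (hk : 1 ≤ k) (hj : j < fib (2 * k - 1)) {s : ℕ} {C : Finset ℕ}
    {b : ℕ} (ih : CGParityBelow k j (fib (2 * s + 3) + ∑ i ∈ C, fib i))
    (hc : OddConfig k (s + 1) C b) (hx : 2 * s + 2 ∈ C) (hx3 : 2 * s + 3 ∉ C) :
    CGParity k (fib (2 * s + 3) + ∑ i ∈ C, fib i + fib (2 * k) + j) b := by
  -- `F(2s+3) + F(2s+2) = F(2s+4)`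
  have h4 : fib (2 * s + 4) = fib (2 * s + 2) + fib (2 * s + 3) := fib_add_two
  have e : 2 * (s + 2) = 2 * s + 4 := by ring
  have hks := (hc.mem _ hx).1
  obtain ⟨hmem, hb⟩ := hc.erase_even hx hx3 fun i hi => by have := hc.mem i hi; omega
  have hR := sum_add_fib_add_lt hk hj (hc.sparse.subset (erase_subset _ _)) hmem (by omega)
  have := fib_mono (show 2 * s + 1 ≤ 2 * s + 4 by omega)
  rw [← add_sum_erase C fib hx] at ih ⊢
  exact (cgParity_sparse_of_below hk hj ih (hc.sparse.subset (erase_subset _ _))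
    (fun i hi => (hmem i hi).1) (by omega) hb fun i hi => hc.least_le i (mem_of_mem_erase hi)
    ).add_fib (q := s + 2) (by omega) (by omega) (by rw [e]; omega) (by rw [e]; omega)

theorem cgParity_gap_two (hk : 1 ≤ k) (hj : j < fib (2 * k - 1)) {s : ℕ} {C : Finset ℕ}
    {b : ℕ} (ih : CGParityBelow k j (fib (2 * s + 5) + ∑ i ∈ C, fib i))
    (hc : OddConfig k (s + 2) C b) (hks : k ≤ s) (htop : ∀ i ∈ C, i ≤ 2 * s + 3)
    (hx : 2 * s + 3 ∈ C) :
    CGParity k (fib (2 * s + 5) + ∑ i ∈ C, fib i + fib (2 * k) + j) b := by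
  -- `F(2s+5) + F(2s+3) = 2 F(2s+4) + F(2s+1)`
  have h3 : fib (2 * s + 3) = fib (2 * s + 1) + fib (2 * s + 2) := fib_add_two
  have h4 : fib (2 * s + 4) = fib (2 * s + 2) + fib (2 * s + 3) := fib_add_two
  have h5 : fib (2 * s + 5) = fib (2 * s + 3) + fib (2 * s + 4) := fib_add_two
  have hc' := hc.erase_top hks hx htop
  have hR := hc'.sum_lt hk hj
  rw [← add_sum_erase C fib hx] at ih ⊢
  exact (ih s _ b hc' (by omega)).add_two_fib (q := s + 2) (by omega) (by omega)
    (by rw [show 2 * (s + 2) - 1 = 2 * s + 3 by omega]; omega)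
    (by rw [show 2 * (s + 2) = 2 * s + 4 by ring]; omega)

theorem cgParity_gap_three (hk : 1 ≤ k) (hj : j < fib (2 * k - 1)) {s : ℕ} {C : Finset ℕ}
    {b : ℕ} (ih : CGParityBelow k j (fib (2 * s + 5) + ∑ i ∈ C, fib i))
    (hc : OddConfig k (s + 2) C b) (hks : k ≤ s) (htop : ∀ i ∈ C, i ≤ 2 * s + 3)
    (hx3 : 2 * s + 3 ∉ C) (hx : 2 * s + 2 ∈ C) :
    CGParity k (fib (2 * s + 5) + ∑ i ∈ C, fib i + fib (2 * k) + j) b := by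
  -- `F(2s+5) + F(2s+2) = 2 F(2s+4)`
  have h3 : fib (2 * s + 3) = fib (2 * s + 1) + fib (2 * s + 2) := fib_add_two
  have h4 : fib (2 * s + 4) = fib (2 * s + 2) + fib (2 * s + 3) := fib_add_two
  have h5 : fib (2 * s + 5) = fib (2 * s + 3) + fib (2 * s + 4) := fib_add_two
  obtain ⟨hmem, hb⟩ := hc.erase_even hx hx3 htop
  have hR := sum_add_fib_add_lt hk hj (hc.sparse.subset (erase_subset _ _)) hmem (by omega)
  have := fib_mono (show 2 * s + 1 ≤ 2 * s + 3 by omega)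
  rw [← add_sum_erase C fib hx] at ih ⊢
  exact (cgParity_sparse_of_below hk hj ih (hc.sparse.subset (erase_subset _ _))
    (fun i hi => (hmem i hi).1) (by omega) hb fun i hi => hc.least_le i (mem_of_mem_erase hi)
    ).add_two_fib (q := s + 2) (by omega) (by omega)
    (by rw [show 2 * (s + 2) - 1 = 2 * s + 3 by omega]; omega)
    (by rw [show 2 * (s + 2) = 2 * s + 4 by ring]; omega)

theorem cgParity_gap_ge_four (hk : 1 ≤ k) (hj : j < fib (2 * k - 1)) {s : ℕ} {C : Finset ℕ}
    {b : ℕ} (ih : CGParityBelow k j (fib (2 * s + 5) + ∑ i ∈ C, fib i))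
    (hc : OddConfig k (s + 2) C b) (hks : k ≤ s) (htop : ∀ i ∈ C, i ≤ 2 * s + 1) :
    CGParity k (fib (2 * s + 5) + ∑ i ∈ C, fib i + fib (2 * k) + j) b := by
  -- `F(2s+5) = F(2s+3) + F(2s+4)`
  have h4 : fib (2 * s + 4) = fib (2 * s + 2) + fib (2 * s + 3) := fib_add_two
  have h5 : fib (2 * s + 5) = fib (2 * s + 3) + fib (2 * s + 4) := fib_add_two
  have hR := sum_add_fib_add_lt hk hj hc.sparse (M := 2 * s + 2)
    (fun i hi => ⟨(hc.mem i hi).1, by have := htop i hi; omega⟩) (by omega)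
  have := fib_pos.2 (show 0 < 2 * s + 4 by omega)
  have e : 2 * (s + 1) + 1 = 2 * s + 3 := by ring
  have hrec := ih (s + 1) C b ⟨by omega, hc.sparse, fun i hi => ⟨(hc.mem i hi).1,
    by have := htop i hi; omega⟩, hc.least, hc.least_le⟩ (by rw [e]; omega)
  rw [e] at hrec
  exact hrec.add_fib (q := s + 2) (by omega) (by omega)
    (by rw [show 2 * (s + 2) = 2 * s + 4 by ring]; omega)
    (by rw [show 2 * (s + 2) = 2 * s + 4 by ring]; omega)

theorem cgParity_oddConfig (hk : 1 ≤ k) (hj : j < fib (2 * k - 1)) {t : ℕ} {C : Finset ℕ}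
    {b : ℕ} (ih : CGParityBelow k j (fib (2 * t + 1) + ∑ i ∈ C, fib i))
    (hc : OddConfig k t C b) :
    CGParity k (fib (2 * t + 1) + ∑ i ∈ C, fib i + fib (2 * k) + j) b := by
  by_cases hsmall : C = ∅ ∧ t ≤ k + 1
  · obtain ⟨rfl, ht⟩ := hsmall
    simpa using cgParity_of_empty hk hj (hc.least.resolve_left (notMem_empty b)).2 hc.le ht
  obtain ⟨s, rfl⟩ : ∃ s, t = s + 1 := ⟨t - 1, by have := hc.le; omega⟩
  rw [show 2 * (s + 1) + 1 = 2 * s + 3 by ring] at ih ⊢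
  by_cases hx3 : 2 * s + 3 ∈ C
  · exact cgParity_gap_zero hk hj ih hc hx3
  by_cases hx2 : 2 * s + 2 ∈ C
  · exact cgParity_gap_one hk hj ih hc hx2 hx3
  have htop : ∀ i ∈ C, i ≤ 2 * s + 1 := fun i hi => by
    have := (hc.mem i hi).2
    have : i ≠ 2 * s + 3 := fun h => hx3 (h ▸ hi)
    have : i ≠ 2 * s + 2 := fun h => hx2 (h ▸ hi)
    omega
  have hks : k + 1 ≤ s := by
    rcases C.eq_empty_or_nonempty with rfl | ⟨i, hi⟩
    · have := hc.le; simp only [true_and, not_le] at hsmall; omega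
    · have := (hc.mem i hi).1; have := htop i hi; omega
  obtain ⟨s, rfl⟩ : ∃ s', s = s' + 1 := ⟨s - 1, by omega⟩
  rw [show 2 * (s + 1) + 3 = 2 * s + 5 by ring] at ih ⊢
  replace htop : ∀ i ∈ C, i ≤ 2 * s + 3 := fun i hi => by have := htop i hi; omega
  by_cases hy3 : 2 * s + 3 ∈ C
  · exact cgParity_gap_two hk hj ih hc (by omega) htop hy3
  by_cases hy2 : 2 * s + 2 ∈ C
  · exact cgParity_gap_three hk hj ih hc (by omega) htop hy3 hy2
  exact cgParity_gap_ge_four hk hj ih hc (by omega) fun i hi => by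
    have := htop i hi
    have : i ≠ 2 * s + 3 := fun h => hy3 (h ▸ hi)
    have : i ≠ 2 * s + 2 := fun h => hy2 (h ▸ hi)
    omega

theorem cgParityBelow_all (hk : 1 ≤ k) (hj : j < fib (2 * k - 1)) (V : ℕ) :
    CGParityBelow k j V := by
  induction V using Nat.strong_induction_on with
  | _ V ih => exact fun t C b hc hlt => cgParity_oddConfig hk hj (ih _ hlt) hc

theorem cgParity_sparse (hk : 1 ≤ k) (hj : j < fib (2 * k - 1)) {S : Finset ℕ}
    (hS : Sparse S) (hmem : ∀ i ∈ S, 2 * k + 2 ≤ i) {b : ℕ} (hb : b ∈ S ∨ S = ∅ ∧ Even b)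
    (hbS : ∀ i ∈ S, b ≤ i) : CGParity k (∑ i ∈ S, fib i + fib (2 * k) + j) b :=
  cgParity_sparse_of_below hk hj (cgParityBelow_all hk hj _) hS hmem (lt_add_one _) hb hbS

end Digit

def OddMin (A : Finset ℕ) : Prop := ∀ a ∈ A, (∀ i ∈ A, a ≤ i) → Odd a

theorem pow_add_pow_succ_le {r : ℝ} (hr0 : 0 ≤ r) (hr : r + r ^ 2 ≤ 1) (a : ℕ) :
    r ^ (a + 1) + r ^ (a + 2) ≤ r ^ a := by
  rw [show r ^ (a + 1) + r ^ (a + 2) = r ^ a * (r + r ^ 2) by ring]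
  exact mul_le_of_le_one_right (pow_nonneg hr0 a) hr

theorem sum_pow_lt_of_sparse {r : ℝ} (hr0 : 0 < r) (hr : r + r ^ 2 ≤ 1) {S : Finset ℕ}
    (hS : Sparse S) {m : ℕ} (hm : ∀ i ∈ S, m < i) : ∑ i ∈ S, r ^ i < r ^ m := by
  induction S using Finset.induction_on_min generalizing m with
  | empty => simpa using pow_pos hr0 m
  | insert a S ha ih =>
    have hgap : ∀ x ∈ S, a + 1 < x := fun x hx => by
      have := ha x hx
      have : x ≠ a + 1 := fun h => hS a (mem_insert_self a S) (h ▸ mem_insert_of_mem hx)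
      omega
    have hS := ih (hS.subset (subset_insert a S)) hgap
    obtain ⟨a, rfl⟩ : ∃ a', a = a' + 1 := ⟨a - 1, by have := hm _ (mem_insert_self _ S); omega⟩
    have hma := hm _ (mem_insert_self _ S)
    have hpair := pow_add_pow_succ_le hr0.le hr a
    have hmono : r ^ a ≤ r ^ m :=
      pow_le_pow_of_le_one hr0.le (by linarith [sq_nonneg r]) (by omega)
    rw [sum_insert fun h => (ha _ h).false]
    linarith

open Real in
theorem floor_sum_fib_mul_goldenRatio {A : Finset ℕ} (hA : Sparse A) (h1 : ∀ i ∈ A, 1 ≤ i)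
    (hodd : OddMin A) : ⌊((∑ i ∈ A, fib i : ℕ) : ℝ) * goldenRatio⌋₊ = ∑ i ∈ A, fib (i + 1) := by
  rcases A.eq_empty_or_nonempty with rfl | hne
  · simp
  set a := A.min' hne
  have ha : a ∈ A := min'_mem A hne
  set ρ : ℝ := -goldenConj with hρ_def
  have hρ0 : 0 < ρ := neg_pos.2 goldenConj_neg
  have hρ1 : ρ < 1 := by linarith [neg_one_lt_goldenConj]
  have hρ : ρ + ρ ^ 2 = 1 := by rw [hρ_def, neg_sq, goldenConj_sq]; ring
  have hdiff : ((∑ i ∈ A, fib (i + 1) : ℕ) : ℝ) - ((∑ i ∈ A, fib i : ℕ) : ℝ) * goldenRatio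
      = -ρ ^ a + ∑ i ∈ A.erase a, goldenConj ^ i := by
    push_cast
    rw [sum_mul, ← sum_sub_distrib, ← add_sum_erase A _ ha]
    simp_rw [mul_comm _ goldenRatio, fib_succ_sub_goldenRatio_mul_fib]
    rw [hρ_def, neg_pow, (hodd a ha fun i hi => min'_le A i hi).neg_one_pow]
    ring
  have hrest : |∑ i ∈ A.erase a, goldenConj ^ i| < ρ ^ (a + 1) := by
    refine (abs_sum_le_sum_abs _ _).trans_lt ?_
    simp_rw [abs_pow, abs_of_neg goldenConj_neg]
    refine sum_pow_lt_of_sparse hρ0 hρ.le (hA.subset (erase_subset a A)) fun i hi => ?_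
    have ⟨hia, hiA⟩ := mem_erase.1 hi
    have := min'_le A i hiA
    have : i ≠ a + 1 := fun h => hA a ha (h ▸ hiA)
    omega
  have hpair : ρ ^ a + ρ ^ (a + 1) ≤ 1 := by
    obtain ⟨a', ha'⟩ : ∃ a', a = a' + 1 := ⟨a - 1, by have := h1 a ha; omega⟩
    rw [ha']
    exact (pow_add_pow_succ_le hρ0.le hρ.le a').trans (pow_le_one₀ hρ0.le hρ1.le)
  have hlt : ρ ^ (a + 1) < ρ ^ a := pow_lt_pow_right_of_lt_one₀ hρ0 hρ1 (by omega)
  have hbounds := abs_lt.1 hrest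
  rw [Nat.floor_eq_iff (by positivity)]
  constructor <;> linarith

theorem exists_sparse_oddMin (t : ℕ) :
    ∃ A : Finset ℕ, Sparse A ∧ (∀ i ∈ A, 1 ≤ i) ∧ OddMin A ∧ ∑ i ∈ A, fib i = t := by
  obtain ⟨Z, hZ, hZmem, hZsum⟩ := exists_sparse_sum_fib t (t + 1)
    (show t < fib (t + 2) by have := le_fib_add_one (t + 2); omega)
  rcases Z.eq_empty_or_nonempty with rfl | hne
  · exact ⟨∅, by simp [Sparse], by simp, by simp [OddMin], hZsum⟩
  set z := Z.min' hne
  have hz : z ∈ Z := min'_mem Z hne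
  rcases z.even_or_odd' with ⟨u, hu | hu⟩
  · have hgap : ∀ i ∈ Z.erase z, 2 * u + 2 ≤ i := fun i hi => by
      have ⟨hiz, hiZ⟩ := mem_erase.1 hi
      have := min'_le Z i hiZ
      have : i ≠ z + 1 := fun h => hZ z hz (h ▸ hiZ)
      omega
    have hu1 : 1 ≤ u := by have := (hZmem z hz).1; omega
    have hodds : ∀ i ∈ (range u).image (2 * · + 1), Odd i ∧ i < 2 * u := fun i hi => by
      obtain ⟨s, hs, rfl⟩ := mem_image.1 hi
      exact ⟨odd_two_mul_add_one s, by rw [mem_range] at hs; omega⟩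
    refine ⟨(range u).image (2 * · + 1) ∪ Z.erase z, ?_, fun i hi => ?_, fun a ha hle => ?_, ?_⟩
    · refine Sparse.union (fun i hi hi1 => ?_) (hZ.subset (erase_subset z Z)) fun i hi j hj => ?_
      · exact Nat.not_odd_iff_even.2 ((hodds i hi).1.add_one) (hodds _ hi1).1
      · have := (hodds i hi).2; have := hgap j hj; omega
    · rcases mem_union.1 hi with hi | hi
      · exact (hodds i hi).1.pos
      · have := hgap i hi; omega
    · have h1 : 1 ∈ (range u).image (2 * · + 1) ∪ Z.erase z :=
        mem_union_left _ (mem_image.2 ⟨0, mem_range.2 (by omega), rfl⟩)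
      have := hle 1 h1
      rcases mem_union.1 ha with ha | ha
      · exact (hodds a ha).1
      · have := hgap a ha; omega
    · rw [sum_union (disjoint_left.2 fun i hi hi' => by
          have := (hodds i hi).2; have := hgap i hi'; omega),
        sum_image fun x _ y _ h => by simpa using h, sum_range_fib_two_mul_add_one, ← hu,
        ← hZsum, ← add_sum_erase Z fib hz]
  · exact ⟨Z, hZ, fun i hi => by have := (hZmem i hi).1; omega,
      fun a ha hle => le_antisymm (hle z hz) (min'_le Z a ha) ▸ hu ▸ odd_two_mul_add_one u, hZsum⟩

theorem exists_isCG_digit_iff_oddMin {k j : ℕ} (hk : 1 ≤ k) (hj : j < fib (2 * k - 1))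
    {A : Finset ℕ} (hA : Sparse A) (h1 : ∀ i ∈ A, 1 ≤ i) :
    ∃ c, IsCG (∑ i ∈ A, fib (i + (2 * k + 1)) + fib (2 * k) + j) c ∧ (1 ≤ c k ↔ OddMin A) := by
  rw [show ∑ i ∈ A, fib (i + (2 * k + 1)) = ∑ i ∈ A.map (addRightEmbedding (2 * k + 1)), fib i
    from (sum_map A (addRightEmbedding (2 * k + 1)) fib).symm]
  have hB : ∀ i ∈ A.map (addRightEmbedding (2 * k + 1)), 2 * k + 2 ≤ i := fun i hi => by
    have := le_of_mem_map_add h1 _ i hi; omega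
  rcases A.eq_empty_or_nonempty with rfl | hne
  · obtain ⟨c, hc, hck⟩ := cgParity_sparse hk hj (hA.map_add _) hB (b := 0)
      (Or.inr ⟨map_empty _, even_two_mul 0⟩) (by simp)
    exact ⟨c, hc, iff_of_true (by omega) fun a ha => absurd ha (notMem_empty a)⟩
  set a := A.min' hne
  have ha : a ∈ A := min'_mem A hne
  obtain ⟨c, hc, hck⟩ := cgParity_sparse hk hj (hA.map_add _) hB (b := a + (2 * k + 1))
    (Or.inl (mem_map_of_mem _ ha)) fun i hi => by
      obtain ⟨x, hx, rfl⟩ := mem_map.1 hi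
      simpa using min'_le A x hx
  refine ⟨c, hc, fun hc1 a' ha' hle => ?_, fun hodd => ?_⟩
  · rw [le_antisymm (hle a ha) (min'_le A a' ha')]
    exact Nat.odd_iff.2 (by omega)
  · have := Nat.odd_iff.1 (hodd a ha fun i hi => min'_le A i hi)
    omega

theorem exists_shift_of_isZeck {k n : ℕ} (hk : 1 ≤ k) {s : Finset ℕ} (hs : IsZeck n s)
    (hks : 2 * k ∈ s) : ∃ A j, Sparse A ∧ (∀ i ∈ A, 1 ≤ i) ∧ j < fib (2 * k - 1) ∧
      n = ∑ i ∈ A, fib (i + (2 * k + 1)) + fib (2 * k) + j := by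
  obtain ⟨hs2, hs, rfl⟩ := hs
  have hs1 : 2 * k + 1 ∉ s := hs _ hks
  have hs0 : 2 * k - 1 ∉ s := fun h => hs _ h (by rwa [show 2 * k - 1 + 1 = 2 * k by omega])
  set H := s.filter (2 * k < ·)
  have hH : ∀ i ∈ H, 2 * k + 2 ≤ i := fun i hi => by
    have ⟨his, hik⟩ := mem_filter.1 hi
    have : i ≠ 2 * k + 1 := fun h => hs1 (h ▸ his)
    omega
  refine ⟨H.image (· - (2 * k + 1)), ∑ i ∈ s.filter (· < 2 * k), fib i, fun i hi hi1 => ?_,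
    fun i hi => ?_, ?_, ?_⟩
  · obtain ⟨x, hx, rfl⟩ := mem_image.1 hi
    obtain ⟨y, hy, hxy⟩ := mem_image.1 hi1
    have := hH x hx
    have := hH y hy
    exact hs x (mem_filter.1 hx).1 (by rw [show x + 1 = y by omega]; exact (mem_filter.1 hy).1)
  · obtain ⟨x, hx, rfl⟩ := mem_image.1 hi
    have := hH x hx
    omega
  · have := sum_fib_add_fib_le (Sparse.subset hs (filter_subset (· < 2 * k) s)) (b := 1)
      (M := 2 * k - 2) le_rfl (by omega) fun i hi => by
        have ⟨his, hik⟩ := mem_filter.1 hi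
        have := hs2 i his
        have : i ≠ 2 * k - 1 := fun h => hs0 (h ▸ his)
        omega
    rw [show 2 * k - 2 + 1 = 2 * k - 1 by omega, fib_one] at this
    omega
  · rw [sum_image fun x hx y hy h => by have := hH x hx; have := hH y hy; omega,
      sum_eq_sum_filter_lt_add s fib hks]
    congr 2
    exact sum_congr rfl fun x hx => by rw [Nat.sub_add_cancel (by have := hH x hx; omega)]

theorem exists_isZeck_of_shift {k j : ℕ} (hk : 1 ≤ k) {A : Finset ℕ} (hA : Sparse A)
    (h1 : ∀ i ∈ A, 1 ≤ i) (hj : j < fib (2 * k - 1)) :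
    ∃ s, IsZeck (∑ i ∈ A, fib (i + (2 * k + 1)) + fib (2 * k) + j) s ∧ 2 * k ∈ s := by
  obtain ⟨Z, hZ, hZmem, rfl⟩ := exists_sparse_sum_fib j (2 * k - 2)
    (by rwa [show 2 * k - 2 + 1 = 2 * k - 1 by omega])
  have hB := le_of_mem_map_add h1 (2 * k + 1)
  have hlow : ∀ i ∈ Z ∪ {2 * k}, 2 ≤ i ∧ i ≤ 2 * k := fun i hi => by
    rcases mem_union.1 hi with hi | hi
    · have := hZmem i hi; omega
    · rw [mem_singleton.1 hi]; omega
  refine ⟨(Z ∪ {2 * k}) ∪ A.map (addRightEmbedding (2 * k + 1)),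
    ⟨fun i hi => ?_, ?_, ?_⟩, by simp⟩
  · rcases mem_union.1 hi with hi | hi
    · exact (hlow i hi).1
    · have := hB i hi; omega
  · refine Sparse.union (hZ.union (by simp [Sparse]) fun i hi x hx => ?_) (hA.map_add _)
      fun i hi x hx => ?_
    · rw [mem_singleton.1 hx]; have := hZmem i hi; omega
    · have := (hlow i hi).2; have := hB x hx; omega
  · rw [sum_union (disjoint_left.2 fun i hi hi' => by
        have := (hlow i hi).2; have := hB i hi'; omega),
      sum_union (disjoint_singleton_right.2 fun h => by have := hZmem _ h; omega),
      sum_singleton, sum_map]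
    simp only [addRightEmbedding_apply]
    ring

theorem main_theorem (k : ℕ) (hk : 1 ≤ k) :
    {n : ℕ | (∃ s : Finset ℕ, IsZeck n s ∧ 2 * k ∈ s) ∧
        (∃ c : ℕ →₀ ℕ, IsCG n c ∧ 1 ≤ c k)} =
      {x : ℕ | ∃ m : ℕ, 1 ≤ m ∧ ∃ j : ℕ, j ≤ Nat.fib (2 * k - 1) - 1 ∧
        x = m * Nat.fib (2 * k) +
          ⌊((m : ℝ) - 1) * ((1 + Real.sqrt 5) / 2)⌋₊ * Nat.fib (2 * k + 1) + j} := by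
  have hF : 1 ≤ fib (2 * k - 1) := fib_pos.2 (by omega)
  rw [show (1 + Real.sqrt 5) / 2 = Real.goldenRatio from rfl]
  ext n
  constructor
  · rintro ⟨⟨s, hs, hks⟩, c, hc, hck⟩
    obtain ⟨A, j, hA, hA1, hj, rfl⟩ := exists_shift_of_isZeck hk hs hks
    obtain ⟨c', hc', hiff⟩ := exists_isCG_digit_iff_oddMin hk hj hA hA1
    refine ⟨∑ i ∈ A, fib i + 1, by omega, j, by omega, ?_⟩
    rw [Nat.cast_add_one, add_sub_cancel_right,
      floor_sum_fib_mul_goldenRatio hA hA1 (hiff.1 (hc.unique hc' ▸ hck)),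
      sum_fib_add_succ A (2 * k)]
    ring
  · rintro ⟨m, hm, j, hj, rfl⟩
    obtain ⟨A, hA, hA1, hodd, hT⟩ := exists_sparse_oddMin (m - 1)
    obtain ⟨c, hc, hiff⟩ := exists_isCG_digit_iff_oddMin hk (show j < fib (2 * k - 1) by omega)
      hA hA1
    have hval : m * fib (2 * k) + ⌊((m : ℝ) - 1) * Real.goldenRatio⌋₊ * fib (2 * k + 1) + j =
        ∑ i ∈ A, fib (i + (2 * k + 1)) + fib (2 * k) + j := by
      rw [← Nat.cast_pred hm, ← hT, floor_sum_fib_mul_goldenRatio hA hA1 hodd,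
        sum_fib_add_succ A (2 * k), hT]
      obtain ⟨m, rfl⟩ : ∃ m', m = m' + 1 := ⟨m - 1, by omega⟩
      simp only [add_tsub_cancel_right]
      ring
    rw [hval]
    exact ⟨exists_isZeck_of_shift hk hA hA1 (by omega), c, hc, hiff.2 hodd⟩
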